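/- There is a constant C such that for all s ∈ ℂ with Re(s) ∈ [−1/4, 0], one has |s · Γ(−s)/Γ(n/2 + s)| ≤ C·(1 + |Im(s)|)^(−2Re(s) − n/2 + 1). -/

import Mathlib

open Complex Real Set MeasureTheory intervalIntegral Filter Topology Interval

namespace Stmt4Aux

lemma Gamma_shift (w : ℂ) (hw : w.im ≠ 0) (k : ℕ) :
    Complex.Gamma (w + k) = Complex.Gamma w * ∏ i ∈ Finset.range k, (w + i) := by
  induction k with
  | zero => simp
  | succ k ih =>
      have h1 : (w + (k:ℂ)) ≠ 0 := by
        intro h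
        apply hw
        have := congrArg Complex.im h
        simpa using this
      have h2 : (w + ((k+1 : ℕ):ℂ)) = (w + k) + 1 := by push_cast; ring
      rw [h2, Complex.Gamma_add_one _ h1, ih, Finset.prod_range_succ]
      push_cast
      ring

lemma gamma_one_add_ge {q : ℝ} (hq : 0 ≤ q) (hq1 : q ≤ 1) : (1:ℝ)/3 ≤ Real.Gamma (q+1) := by
  have h0 : (0:ℝ) < q + 1 := by linarith
  rw [Real.Gamma_eq_integral h0]
  have hconv : IntegrableOn (fun x => rexp (-x) * x ^ (q+1-1)) (Ioi 0) volume :=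
    Real.GammaIntegral_convergent h0
  have hsub : Ioi (1:ℝ) ⊆ Ioi (0:ℝ) := fun x hx => mem_Ioi.2 (lt_trans one_pos (mem_Ioi.1 hx))
  have hnn : ∀ x ∈ Ioi (0:ℝ), 0 ≤ rexp (-x) * x ^ (q+1-1) := by
    intro x hx
    have : (0:ℝ) < x := hx
    positivity
  have step1 : ∫ x in Ioi (1:ℝ), rexp (-x) * x ^ (q+1-1) ≤ ∫ x in Ioi (0:ℝ), rexp (-x) * x ^ (q+1-1) := by
    apply setIntegral_mono_set hconv
    · filter_upwards [ae_restrict_mem measurableSet_Ioi] with x hx using hnn x hx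
    · exact HasSubset.Subset.eventuallyLE hsub
  have hexp : IntegrableOn (fun x => rexp (-x)) (Ioi (1:ℝ)) volume := by
    have := exp_neg_integrableOn_Ioi 1 (one_pos)
    simpa using this
  have step2 : ∫ x in Ioi (1:ℝ), rexp (-x) ≤ ∫ x in Ioi (1:ℝ), rexp (-x) * x ^ (q+1-1) := by
    apply setIntegral_mono_on hexp (hconv.mono_set hsub) measurableSet_Ioi
    intro x hx
    have hx1 : (1:ℝ) ≤ x := le_of_lt hx
    nth_rewrite 1 [← mul_one (rexp (-x))]
    apply mul_le_mul_of_nonneg_left _ (Real.exp_nonneg _)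
    rw [show q+1-1 = q by ring]
    calc (1:ℝ) = 1 ^ q := (Real.one_rpow q).symm
    _ ≤ x ^ q := Real.rpow_le_rpow (by norm_num) hx1 hq
  have step3 : (1:ℝ)/3 ≤ ∫ x in Ioi (1:ℝ), rexp (-x) := by
    rw [integral_exp_neg_Ioi]
    rw [Real.exp_neg]
    have : rexp 1 < 3 := by
      have := Real.exp_one_lt_d9
      linarith
    have h1 : (0:ℝ) < rexp 1 := Real.exp_pos 1
    rw [le_inv_comm₀ (by norm_num : (0:ℝ) < 1/3) h1]
    linarith
  linarith

lemma abs_Gamma_absIm (a b : ℝ) :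
    ‖Complex.Gamma (a + b*I)‖ = ‖Complex.Gamma (a + (|b|)*I)‖ := by
  rcases le_or_gt 0 b with hb | hb
  · rw [_root_.abs_of_nonneg hb]
  · rw [_root_.abs_of_neg hb]
    have h : (a : ℂ) + b*I = (starRingEnd ℂ) (a + (-b)*I) := by
      apply Complex.ext <;> simp
    rw [h, Complex.Gamma_conj, Complex.norm_conj]
    norm_num

lemma hasDerivAt_ofReal_cpow_const' {y : ℝ} (hy : 0 < y) (c : ℂ) :
    HasDerivAt (fun w : ℝ => (w:ℂ)^c) (c * (y:ℂ)^(c-1)) y :=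
  (Complex.hasStrictDerivAt_cpow_const
    (Complex.ofReal_mem_slitPlane.2 hy)).hasDerivAt.comp_ofReal

lemma beta_bound {x q t : ℝ} (hx : 0 < x) (hx1 : x ≤ 1/4) (hq : 0 < q) (hq1 : q ≤ 1)
    (ht : 2 ≤ t) :
    ‖Complex.betaIntegral q ((x:ℂ) + t*I)‖ ≤ 5/q * t^(-q) := by
  have ht0 : (0:ℝ) < t := by linarith
  set z : ℂ := (x:ℂ) + t*I with hz_def
  have hz_re : z.re = x := by simp [hz_def]
  have hz_im : z.im = t := by simp [hz_def]
  have habs_z : t ≤ ‖z‖ := by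
    calc t = |z.im| := by rw [hz_im, _root_.abs_of_pos ht0]
    _ ≤ ‖z‖ := Complex.abs_im_le_norm z
  have hz_ne : z ≠ 0 := by
    intro h; rw [h] at hz_im; simp at hz_im; linarith
  set f : ℝ → ℂ := fun y => (y:ℂ)^((q:ℂ)-1) * (1-(y:ℂ))^(z-1) with hf_def
  set δ : ℝ := t⁻¹ with hδ_def
  have hδ0 : 0 < δ := by positivity
  have hδhalf : δ ≤ 1/2 := by
    rw [hδ_def]
    rw [inv_le_comm₀ ht0 (by norm_num)]
    linarith
  have hδ1 : δ < 1 := by linarith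
  have hint : IntervalIntegrable f volume 0 1 := by
    apply Complex.betaIntegral_convergent (u := (q:ℂ)) (v := z) <;> simp [hz_re, hq, hx]
  have hsub1 : uIcc 0 δ ⊆ uIcc (0:ℝ) 1 := by
    rw [uIcc_of_le hδ0.le, uIcc_of_le (by norm_num : (0:ℝ) ≤ 1)]
    exact Icc_subset_Icc le_rfl hδ1.le
  have hsub2 : uIcc δ 1 ⊆ uIcc (0:ℝ) 1 := by
    rw [uIcc_of_le hδ1.le, uIcc_of_le (by norm_num : (0:ℝ) ≤ 1)]
    exact Icc_subset_Icc hδ0.le le_rfl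
  have hint1 : IntervalIntegrable f volume 0 δ := hint.mono_set hsub1
  have hint2 : IntervalIntegrable f volume δ 1 := hint.mono_set hsub2
  have hsplit : Complex.betaIntegral q z = (∫ y in (0:ℝ)..δ, f y) + ∫ y in δ..1, f y := by
    rw [Complex.betaIntegral, intervalIntegral.integral_add_adjacent_intervals hint1 hint2]
  -- rewrite δ^q etc
  have hδq : ∀ r : ℝ, δ ^ r = t ^ (-r) := by
    intro r
    rw [hδ_def, Real.inv_rpow ht0.le, ← Real.rpow_neg ht0.le]
  have hp1 : ‖∫ y in (0:ℝ)..δ, f y‖ ≤ 2/q * t^(-q) := by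
    have hg : IntervalIntegrable (fun y : ℝ => 2 * y^(q-1)) volume 0 δ :=
      (intervalIntegrable_rpow' (by linarith)).const_mul 2
    have hbd : ∀ᵐ y ∂(volume.restrict (Ι (0:ℝ) δ)), ‖f y‖ ≤ 2 * y^(q-1) := by
      filter_upwards [ae_restrict_mem measurableSet_uIoc] with y hy
      rw [uIoc_of_le hδ0.le] at hy
      obtain ⟨hy0, hyδ⟩ := hy
      have hy1 : y < 1 := lt_of_le_of_lt hyδ hδ1
      have h1y : (0:ℝ) < 1 - y := by linarith
      rw [hf_def]
      simp only [norm_mul]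
      rw [Complex.norm_cpow_eq_rpow_re_of_pos hy0]
      have hc : (1 : ℂ) - (y:ℂ) = ((1-y : ℝ) : ℂ) := by push_cast; ring
      rw [hc, Complex.norm_cpow_eq_rpow_re_of_pos h1y]
      simp only [Complex.sub_re, Complex.ofReal_re, Complex.one_re, hz_re]
      rw [mul_comm]
      apply mul_le_mul_of_nonneg_right _ (Real.rpow_nonneg hy0.le _)
      calc (1-y) ^ (x - 1)
        ≤ (1-y) ^ (-1 : ℝ) :=
          Real.rpow_le_rpow_of_exponent_ge h1y (by linarith) (by linarith)
      _ = (1-y)⁻¹ := Real.rpow_neg_one _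
      _ ≤ (1/2 : ℝ)⁻¹ := by
          apply inv_anti₀ (by norm_num)
          linarith [hδhalf]
      _ = 2 := by norm_num
    have h1 := intervalIntegral.norm_integral_le_abs_of_norm_le hbd hg
    refine h1.trans ?_
    rw [intervalIntegral.integral_const_mul, integral_rpow (Or.inl (by linarith))]
    have : q - 1 + 1 = q := by ring
    rw [this, Real.zero_rpow hq.ne', hδq q]
    rw [sub_zero, _root_.abs_of_nonneg (by positivity)]
    apply le_of_eq
    field_simp
  -- tail piece
  set u : ℝ → ℂ := fun y => (y:ℂ)^((q:ℂ)-1) with hu_def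
  set u' : ℝ → ℂ := fun y => ((q:ℂ)-1) * (y:ℂ)^((q:ℂ)-2) with hu'_def
  set v : ℝ → ℂ := fun y => -((1-(y:ℂ))^z) / z with hv_def
  set v' : ℝ → ℂ := fun y => (1-(y:ℂ))^(z-1) with hv'_def
  have hclaim : ∀ b : ℝ, δ ≤ b → b < 1 →
      ‖∫ y in δ..b, f y‖ ≤ 3 * t^(-q) := by
    intro b hδb hb1
    have huIcc : uIcc δ b = Icc δ b := uIcc_of_le hδb
    -- derivative facts
    have hu : ∀ y ∈ uIcc δ b, HasDerivAt u (u' y) y := by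
      intro y hy
      rw [huIcc] at hy
      have hy0 : 0 < y := lt_of_lt_of_le hδ0 hy.1
      have := hasDerivAt_ofReal_cpow_const' hy0 ((q:ℂ)-1)
      simpa [hu_def, hu'_def, show (q:ℂ)-1-1 = (q:ℂ)-2 by ring] using this
    have hv : ∀ y ∈ uIcc δ b, HasDerivAt v (v' y) y := by
      intro y hy
      rw [huIcc] at hy
      have h1y : (0:ℝ) < 1 - y := by
        have := hy.2; linarith [lt_of_le_of_lt this hb1]
      have hbase := hasDerivAt_ofReal_cpow_const' h1y z
      have hinner : HasDerivAt (fun w : ℝ => 1 - w) (-1 : ℝ) y := by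
        simpa using (hasDerivAt_id y).const_sub 1
      have h3 : HasDerivAt (fun w : ℝ => ((1 - w : ℝ):ℂ)^z)
          ((-1 : ℝ) • (z * ((1-y:ℝ):ℂ)^(z-1))) y := HasDerivAt.scomp y hbase hinner
      have h4 := (h3.neg).div_const z
      rw [show ((1-y:ℝ):ℂ) = 1 - (y:ℂ) by push_cast; ring] at h4
      convert h4 using 1
      · rfl
      · rw [hv_def]; funext w; rw [Pi.neg_apply]; push_cast; ring_nf
      · rw [hv'_def]; field_simp; rw [neg_smul, one_smul, neg_neg]
    have hu'int : IntervalIntegrable u' volume δ b := by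
      apply ContinuousOn.intervalIntegrable
      intro y hy
      rw [huIcc] at hy
      have hy0 : 0 < y := lt_of_lt_of_le hδ0 hy.1
      exact (continuousAt_const.mul
        (hasDerivAt_ofReal_cpow_const' hy0 ((q:ℂ)-2)).continuousAt).continuousWithinAt
    have hv'int : IntervalIntegrable v' volume δ b := by
      apply ContinuousOn.intervalIntegrable
      intro y hy
      rw [huIcc] at hy
      have h1y : (0:ℝ) < 1 - y := by
        have := hy.2; linarith [lt_of_le_of_lt this hb1]
      have hbase := (hasDerivAt_ofReal_cpow_const' h1y (z-1)).continuousAt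
      have : ContinuousAt (fun w : ℝ => ((1 - w :ℝ):ℂ)^(z-1)) y :=
        hbase.comp (continuous_const.sub continuous_id).continuousAt
      apply ContinuousAt.continuousWithinAt
      simpa [hv'_def] using this
    have key := intervalIntegral.integral_mul_deriv_eq_deriv_mul hu hv hu'int hv'int
    have hff : (∫ y in δ..b, f y) = ∫ y in δ..b, u y * v' y := rfl
    rw [hff, key]
    -- now bound the three terms
    have hmul : t^(1-q) * t⁻¹ = t^(-q) := by
      rw [← Real.rpow_neg_one t, ← Real.rpow_add ht0]
      ring_nf
    have habs_u : ∀ y : ℝ, δ ≤ y → ‖u y‖ ≤ t^(1-q) := by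
      intro y hy
      have hy0 : 0 < y := lt_of_lt_of_le hδ0 hy
      rw [hu_def]
      simp only []
      rw [Complex.norm_cpow_eq_rpow_re_of_pos hy0]
      simp only [Complex.sub_re, Complex.ofReal_re, Complex.one_re]
      calc y ^ (q-1) ≤ δ ^ (q-1) :=
        Real.rpow_le_rpow_of_nonpos hδ0 hy (by linarith)
      _ = t ^ (-(q-1)) := hδq _
      _ = t ^ (1-q) := by ring_nf
    have habs_v : ∀ y : ℝ, 0 ≤ y → y ≤ b → ‖v y‖ ≤ t⁻¹ := by
      intro y hy0' hy
      have h1y : (0:ℝ) < 1 - y := by linarith [lt_of_le_of_lt hy hb1]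
      rw [hv_def]
      simp only []
      rw [norm_div, norm_neg]
      rw [show (1 : ℂ) - (y:ℂ) = ((1-y : ℝ) : ℂ) by push_cast; ring,
        Complex.norm_cpow_eq_rpow_re_of_pos h1y, hz_re]
      rw [← one_div t]
      apply div_le_div₀ (by norm_num) _ ht0 habs_z
      exact Real.rpow_le_one h1y.le (by linarith) hx.le
    have hterm : ∀ y : ℝ, δ ≤ y → y ≤ b → ‖u y * v y‖ ≤ t^(-q) := by
      intro y h1 h2
      rw [norm_mul, ← hmul]
      exact mul_le_mul (habs_u y h1) (habs_v y (le_trans hδ0.le h1) h2) (norm_nonneg _)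
        (Real.rpow_nonneg ht0.le _)
    have habs3 : ‖∫ y in δ..b, u' y * v y‖ ≤ t^(-q) := by
      rcases lt_or_eq_of_le hq1 with hqlt | hqeq
      · -- q < 1
        have hg2 : IntervalIntegrable (fun y : ℝ => ((1-q) * t⁻¹) * y^(q-2)) volume δ b := by
          apply ContinuousOn.intervalIntegrable
          intro y hy
          rw [huIcc] at hy
          have hy0 : 0 < y := lt_of_lt_of_le hδ0 hy.1
          exact (continuousAt_const.mul
            (Real.continuousAt_rpow_const y (q-2) (Or.inl hy0.ne'))).continuousWithinAt
        have hbd2 : ∀ᵐ y ∂(volume.restrict (Ι δ b)), ‖u' y * v y‖ ≤ ((1-q) * t⁻¹) * y^(q-2) := by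
          filter_upwards [ae_restrict_mem measurableSet_uIoc] with y hy
          rw [uIoc_of_le hδb] at hy
          have hy0 : 0 < y := lt_of_lt_of_le hδ0 hy.1.le
          rw [norm_mul, hu'_def]
          simp only []
          rw [norm_mul, show ((q:ℂ)-1) = ((q-1:ℝ):ℂ) by push_cast; ring, Complex.norm_real, Real.norm_eq_abs,
            Complex.norm_cpow_eq_rpow_re_of_pos hy0]
          simp only [Complex.sub_re, Complex.ofReal_re]
          rw [_root_.abs_of_nonpos (by linarith)]
          have := habs_v y (le_trans hδ0.le hy.1.le) hy.2
          calc -(q-1) * y^((q:ℂ)-2).re * ‖v y‖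
              ≤ -(q-1) * y^((q:ℂ)-2).re * t⁻¹ := by
                apply mul_le_mul_of_nonneg_left this
                have : (0:ℝ) ≤ -(q-1) := by linarith
                positivity
          _ = ((1-q) * t⁻¹) * y^(q-2) := by
                simp only [Complex.sub_re, Complex.ofReal_re]
                norm_num
                ring_nf
        have h1 := intervalIntegral.norm_integral_le_abs_of_norm_le hbd2 hg2
        refine h1.trans ?_
        rw [intervalIntegral.integral_const_mul,
          integral_rpow (Or.inr ⟨by linarith, by rw [huIcc]; exact fun h => absurd h.1 (not_le.2 hδ0)⟩)]
        have hble : b ^ (q-1) ≤ δ ^ (q-1) := Real.rpow_le_rpow_of_nonpos hδ0 hδb (by linarith)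
        have heq : (1-q) * t⁻¹ * ((b ^ (q-2+1) - δ ^ (q-2+1)) / (q-2+1))
            = t⁻¹ * (δ ^ (q-1) - b ^ (q-1)) := by
          rw [show q-2+1 = q-1 by ring]
          have hq1' : q - 1 ≠ 0 := by linarith
          field_simp
          ring
        rw [heq, _root_.abs_of_nonneg
          (mul_nonneg (inv_nonneg.2 ht0.le) (sub_nonneg.2 hble))]
        calc t⁻¹ * (δ ^ (q-1) - b ^ (q-1)) ≤ t⁻¹ * δ ^ (q-1) := by
              apply mul_le_mul_of_nonneg_left _ (by positivity)
              have : (0:ℝ) ≤ b ^ (q-1) := Real.rpow_nonneg (by linarith [hδ0]) _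
              linarith
        _ = t⁻¹ * t ^ (1-q) := by rw [hδq, show -(q-1) = 1-q by ring]
        _ = t^(-q) := by rw [mul_comm]; exact hmul
      · -- q = 1
        have hz0 : ∀ y : ℝ, u' y * v y = 0 := by
          intro y
          have h0 : u' y = 0 := by
            rw [hu'_def]
            simp only []
            rw [show ((q:ℂ)-1) = 0 by rw [hqeq]; norm_num]
            exact zero_mul _
          rw [h0, zero_mul]
        simp only [hz0]
        rw [intervalIntegral.integral_zero]
        simp only [norm_zero]
        positivity
    calc ‖u b * v b - u δ * v δ - ∫ y in δ..b, u' y * v y‖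
        ≤ ‖u b * v b - u δ * v δ‖ + ‖∫ y in δ..b, u' y * v y‖ := norm_sub_le _ _
    _ ≤ (‖u b * v b‖ + ‖u δ * v δ‖) + ‖∫ y in δ..b, u' y * v y‖ :=
          add_le_add_left (norm_sub_le _ _) _
    _ ≤ (t^(-q) + t^(-q)) + t^(-q) := by
          exact add_le_add (add_le_add (hterm b hδb le_rfl) (hterm δ le_rfl hδb)) habs3
    _ = 3 * t^(-q) := by ring
  have hp2 : ‖∫ y in δ..1, f y‖ ≤ 3 * t^(-q) := by
    have hcont : ContinuousOn (fun b => ∫ y in δ..b, f y) (uIcc δ 1) :=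
      continuousOn_primitive_interval' hint2 left_mem_uIcc
    have hne : (𝓝[Ico δ 1] (1:ℝ)).NeBot := by
      rw [← mem_closure_iff_nhdsWithin_neBot, closure_Ico (ne_of_lt hδ1)]
      exact ⟨hδ1.le, le_rfl⟩
    have hsubset : Ico δ 1 ⊆ uIcc δ 1 := by
      rw [uIcc_of_le hδ1.le]
      exact Ico_subset_Icc_self
    have htend : Tendsto (fun b => ∫ y in δ..b, f y) (𝓝[Ico δ 1] 1)
        (𝓝 (∫ y in δ..1, f y)) :=
      ((hcont 1 right_mem_uIcc).mono hsubset).tendsto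
    apply le_of_tendsto htend.norm
    apply eventually_nhdsWithin_of_forall
    intro b hb
    exact hclaim b hb.1 hb.2
  rw [hsplit]
  calc ‖(∫ y in (0:ℝ)..δ, f y) + ∫ y in δ..1, f y‖
      ≤ ‖∫ y in (0:ℝ)..δ, f y‖ + ‖∫ y in δ..1, f y‖ :=
        norm_add_le _ _
  _ ≤ 2/q * t^(-q) + 3 * t^(-q) := add_le_add hp1 hp2
  _ ≤ 5/q * t^(-q) := by
      have h3 : 3 * t^(-q) ≤ 3/q * t^(-q) := by
        apply mul_le_mul_of_nonneg_right _ (Real.rpow_nonneg ht0.le _)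
        rw [le_div_iff₀ hq]
        nlinarith
      have : 2/q * t^(-q) + 3/q * t^(-q) = 5/q * t^(-q) := by ring
      linarith

lemma ratio_bound {x q t : ℝ} (hx : 0 < x) (hx1 : x ≤ 1/4) (hq : 0 < q) (hq1 : q ≤ 1)
    (ht : 2 ≤ t) :
    ‖Complex.Gamma ((x:ℂ) + t*I)‖ ≤
      15 * t^(-q) * ‖Complex.Gamma (((x+q:ℝ):ℂ) + t*I)‖ := by
  have ht0 : (0:ℝ) < t := by linarith
  set z : ℂ := (x:ℂ) + t*I with hz_def
  have hzq : z + (q:ℂ) = ((x+q:ℝ):ℂ) + t*I := by push_cast; ring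
  have h1 := Complex.Gamma_mul_Gamma_eq_betaIntegral (s := z) (t := (q:ℂ))
    (by simp [hz_def, hx]) (by simp [hq])
  have hGq : Complex.Gamma (q:ℂ) = ((Real.Gamma q : ℝ) : ℂ) := Complex.Gamma_ofReal q
  have hGqpos : 0 < Real.Gamma q := Real.Gamma_pos_of_pos hq
  have habsB := beta_bound hx hx1 hq hq1 ht
  have key : ‖Complex.Gamma z‖ * Real.Gamma q
      ≤ 5/q * t^(-q) * ‖Complex.Gamma (z + (q:ℂ))‖ := by
    have h2 := congrArg (‖·‖) h1
    rw [norm_mul, norm_mul, hGq, Complex.norm_real, Real.norm_eq_abs, _root_.abs_of_pos hGqpos] at h2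
    rw [h2]
    rw [← Complex.betaIntegral_symm]
    rw [mul_comm (5/q * t^(-q)) _]
    exact mul_le_mul_of_nonneg_left habsB (norm_nonneg _)
  rw [← hzq]
  rw [← mul_le_mul_iff_of_pos_right hGqpos]
  calc ‖Complex.Gamma z‖ * Real.Gamma q
      ≤ 5/q * t^(-q) * ‖Complex.Gamma (z + (q:ℂ))‖ := key
  _ ≤ 15 * t^(-q) * ‖Complex.Gamma (z + (q:ℂ))‖ * Real.Gamma q := by
      have h5 : 5/q ≤ 15 * Real.Gamma q := by
        rw [div_le_iff₀ hq]
        have hG1 : Real.Gamma (q+1) = q * Real.Gamma q := Real.Gamma_add_one hq.ne'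
        have hG13 := gamma_one_add_ge hq.le hq1
        nlinarith
      calc 5/q * t^(-q) * ‖Complex.Gamma (z + (q:ℂ))‖
          ≤ (15 * Real.Gamma q) * t^(-q) * ‖Complex.Gamma (z + (q:ℂ))‖ := by
            apply mul_le_mul_of_nonneg_right _ (norm_nonneg _)
            exact mul_le_mul_of_nonneg_right h5 (Real.rpow_nonneg ht0.le _)
      _ = 15 * t^(-q) * ‖Complex.Gamma (z + (q:ℂ))‖ * Real.Gamma q := by ring

lemma abs_Gamma_I_sq {t : ℝ} (ht : 2 ≤ t) :
    (‖Complex.Gamma ((t:ℂ)*I)‖)^2 * (t * Real.sinh (π*t)) = π := by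
  have ht0 : (0:ℝ) < t := by linarith
  have hne : (t:ℂ)*I ≠ 0 := by simp [Complex.ext_iff, ht0.ne']
  have h1 := Complex.Gamma_mul_Gamma_one_sub ((t:ℂ)*I)
  have hconj : (1:ℂ) - (t:ℂ)*I = (starRingEnd ℂ) (1 + (t:ℂ)*I) := by
    apply Complex.ext <;> simp
  have h2 : Complex.Gamma (1 - (t:ℂ)*I) = (starRingEnd ℂ) (Complex.Gamma (1 + (t:ℂ)*I)) := by
    rw [hconj, Complex.Gamma_conj]
  have h3 : Complex.Gamma (1 + (t:ℂ)*I) = (t:ℂ)*I * Complex.Gamma ((t:ℂ)*I) := by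
    rw [add_comm]
    exact Complex.Gamma_add_one _ hne
  have h4 := congrArg (‖·‖) h1
  rw [h2, h3, norm_mul, Complex.norm_conj, norm_mul] at h4
  have hsin : ‖Complex.sin ((π:ℂ) * ((t:ℂ)*I))‖ = Real.sinh (π*t) := by
    rw [show (π:ℂ) * ((t:ℂ)*I) = ((π*t : ℝ):ℂ) * I by push_cast; ring]
    rw [Complex.sin_mul_I]
    rw [norm_mul, Complex.norm_I, mul_one, ← Complex.ofReal_sinh, Complex.norm_real, Real.norm_eq_abs]
    rw [_root_.abs_of_pos (Real.sinh_pos_iff.2 (by positivity))]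
  rw [norm_div, hsin, norm_mul, Complex.norm_I, mul_one, Complex.norm_real, Real.norm_eq_abs,
    _root_.abs_of_pos ht0, Complex.norm_real, Real.norm_eq_abs, _root_.abs_of_pos Real.pi_pos] at h4
  have hsinh : 0 < Real.sinh (π*t) := Real.sinh_pos_iff.2 (by positivity)
  field_simp at h4 ⊢
  nlinarith [h4, norm_nonneg (Complex.Gamma ((t:ℂ)*I))]

lemma abs_Gamma_half_sq {t : ℝ} (ht : 2 ≤ t) :
    (‖Complex.Gamma ((1/2:ℝ) + (t:ℂ)*I)‖)^2 * Real.cosh (π*t) = π := by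
  have ht0 : (0:ℝ) < t := by linarith
  set z : ℂ := ((1/2:ℝ):ℂ) + (t:ℂ)*I with hz_def
  have h1 := Complex.Gamma_mul_Gamma_one_sub z
  have hconj : (1:ℂ) - z = (starRingEnd ℂ) z := by
    rw [hz_def]; apply Complex.ext <;> simp; norm_num
  have h2 : Complex.Gamma (1 - z) = (starRingEnd ℂ) (Complex.Gamma z) := by
    rw [hconj, Complex.Gamma_conj]
  have h4 := congrArg (‖·‖) h1
  rw [h2, norm_mul, Complex.norm_conj] at h4
  have hsin : ‖Complex.sin ((π:ℂ) * z)‖ = Real.cosh (π*t) := by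
    have heq : (π:ℂ) * z = (π:ℂ)/2 + ((π*t : ℝ):ℂ) * I := by rw [hz_def]; push_cast; ring
    rw [heq, Complex.sin_add, Complex.sin_pi_div_two, Complex.cos_pi_div_two]
    simp only [one_mul, zero_mul, add_zero]
    rw [Complex.cos_mul_I, ← Complex.ofReal_cosh, Complex.norm_real, Real.norm_eq_abs]
    exact _root_.abs_of_pos (Real.cosh_pos _)
  rw [norm_div, hsin, Complex.norm_real, Real.norm_eq_abs, _root_.abs_of_pos Real.pi_pos] at h4
  have hcosh : 0 < Real.cosh (π*t) := Real.cosh_pos _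
  have h5 : ‖Complex.Gamma z‖ ^ 2 = π / Real.cosh (π*t) := by
    rw [pow_two, h4]
  rw [h5]
  field_simp

lemma ratio_bound_zero_half {t : ℝ} (ht : 2 ≤ t) :
    ‖Complex.Gamma (((0:ℝ):ℂ) + t*I)‖ ≤
      15 * t^(-(1/2:ℝ)) * ‖Complex.Gamma (((0+1/2:ℝ):ℂ) + t*I)‖ := by
  have ht0 : (0:ℝ) < t := by linarith
  have h01 : (((0:ℝ):ℂ) + t*I) = (t:ℂ)*I := by push_cast; ring
  have h02 : (((0+1/2:ℝ):ℂ) + t*I) = ((1/2:ℝ):ℂ) + (t:ℂ)*I := by push_cast; ring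
  rw [h01, h02]
  set a := ‖Complex.Gamma ((t:ℂ)*I)‖ with ha_def
  set b := ‖Complex.Gamma (((1/2:ℝ):ℂ) + (t:ℂ)*I)‖ with hb_def
  have ha0 : 0 ≤ a := norm_nonneg _
  have hb0 : 0 ≤ b := norm_nonneg _
  have ha2 := abs_Gamma_I_sq ht
  have hb2 := abs_Gamma_half_sq ht
  have hsinh : 0 < Real.sinh (π*t) := Real.sinh_pos_iff.2 (by positivity)
  have hcosh : 0 < Real.cosh (π*t) := Real.cosh_pos _
  have hcs : Real.cosh (π*t) ≤ 2 * Real.sinh (π*t) := by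
    rw [Real.cosh_eq, Real.sinh_eq]
    have h6 : (6:ℝ) ≤ π*t := by nlinarith [Real.pi_gt_three]
    have hE : π*t + 1 ≤ rexp (π*t) := Real.add_one_le_exp _
    have he1 : rexp (-(π*t)) ≤ 1 := Real.exp_le_one_iff.2 (by linarith)
    linarith
  have hrt : (t^(-(1/2:ℝ)))^2 = t⁻¹ := by
    rw [pow_two, ← Real.rpow_add ht0, ← Real.rpow_neg_one t]
    norm_num
  have key : a^2 * t ≤ 2 * b^2 := by
    have h1 : a^2 * t * Real.sinh (π*t) = b^2 * Real.cosh (π*t) := by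
      rw [mul_assoc, ha2, hb2]
    have h2 : b^2 * Real.cosh (π*t) ≤ 2 * b^2 * Real.sinh (π*t) := by
      nlinarith [sq_nonneg b]
    have h3 : a^2 * t * Real.sinh (π*t) ≤ 2 * b^2 * Real.sinh (π*t) := by linarith
    exact le_of_mul_le_mul_right h3 hsinh
  have hsq : a^2 ≤ (15 * t^(-(1/2:ℝ)) * b)^2 := by
    have hexp : (15 * t^(-(1/2:ℝ)) * b)^2 = 225 * t⁻¹ * b^2 := by
      rw [mul_pow, mul_pow, hrt]
      ring
    rw [hexp]
    have ht1 : t * t⁻¹ = 1 := mul_inv_cancel₀ ht0.ne'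
    have hb2nn : 0 ≤ b^2 := sq_nonneg b
    have hinv : 0 ≤ t⁻¹ := by positivity
    calc a^2 = (a^2 * t) * t⁻¹ := by rw [mul_assoc, ht1, mul_one]
    _ ≤ (2 * b^2) * t⁻¹ := mul_le_mul_of_nonneg_right key hinv
    _ ≤ 225 * t⁻¹ * b^2 := by nlinarith
  have hc0 : 0 ≤ 15 * t^(-(1/2:ℝ)) * b := by positivity
  nlinarith [hsq, ha0, hc0]

lemma workhorse (n : ℕ) (hn : 1 ≤ n) {σ t : ℝ} (hσl : -(1/4) ≤ σ) (hσr : σ ≤ 0)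
    (ht : 2 ≤ t) :
    ‖Complex.Gamma (((1-σ:ℝ):ℂ) + t*I)‖ ≤
      (15 * 2^(n+1)) * (1+t)^(-2*σ - (n:ℝ)/2 + 1) *
        ‖Complex.Gamma ((((n:ℝ)/2+σ:ℝ):ℂ) + t*I)‖ := by
  have ht0 : (0:ℝ) < t := by linarith
  set k : ℕ := (n-1)/2 with hk_def
  have hk : 2*k+1 = n ∨ 2*k+2 = n := by omega
  set x : ℝ := -σ with hx_def
  set q : ℝ := 2*σ + ((n:ℝ)/2 - k) with hq_def
  have hc : (n:ℝ)/2 - (k:ℝ) = 1/2 ∨ (n:ℝ)/2 - (k:ℝ) = 1 := by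
    rcases hk with h | h
    · left
      have : (n:ℝ) = 2*(k:ℝ)+1 := by exact_mod_cast (congrArg (Nat.cast : ℕ → ℝ) h).symm
      rw [this]; ring
    · right
      have : (n:ℝ) = 2*(k:ℝ)+2 := by exact_mod_cast (congrArg (Nat.cast : ℕ → ℝ) h).symm
      rw [this]; ring
  have hq0 : 0 ≤ q := by rcases hc with h | h <;> rw [hq_def, h] <;> linarith
  have hq1 : q ≤ 1 := by rcases hc with h | h <;> rw [hq_def, h] <;> linarith
  have hx0 : 0 ≤ x := by rw [hx_def]; linarith
  have hx1 : x ≤ 1/4 := by rw [hx_def]; linarith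
  have hxq : x + q = (n:ℝ)/2 + σ - k := by rw [hx_def, hq_def]; ring
  have hkn : (k:ℝ) ≤ (n:ℝ) := by
    have hkn' : k ≤ n := by omega
    exact_mod_cast hkn'
  have hqk : q + (k:ℝ) = 2*σ + (n:ℝ)/2 := by rw [hq_def]; ring
  have hqk0 : 0 ≤ q + (k:ℝ) := by
    rw [hqk]
    have : (1:ℝ) ≤ (n:ℝ) := by exact_mod_cast hn
    linarith
  have hqkn : q + (k:ℝ) ≤ (n:ℝ) + 1 := by
    rw [hqk]
    have : (1:ℝ) ≤ (n:ℝ) := by exact_mod_cast hn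
    linarith
  -- Part A : numerator recurrence
  have hne : ((x:ℝ):ℂ) + t*I ≠ 0 := by
    intro h
    have := congrArg Complex.im h
    simp at this
    linarith
  have habs_num : ‖Complex.Gamma (((1-σ:ℝ):ℂ) + t*I)‖
      = ‖((x:ℝ):ℂ) + t*I‖ * ‖Complex.Gamma (((x:ℝ):ℂ) + t*I)‖ := by
    have h1 : (((x:ℝ):ℂ) + t*I) + 1 = ((1-σ:ℝ):ℂ) + t*I := by
      rw [hx_def]; push_cast; ring
    rw [← h1, Complex.Gamma_add_one _ hne, norm_mul]
  -- Part B : ratio bound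
  have habs_ratio : ‖Complex.Gamma (((x:ℝ):ℂ) + t*I)‖ ≤
      15 * t^(-q) * ‖Complex.Gamma (((x+q:ℝ):ℂ) + t*I)‖ := by
    rcases hx0.lt_or_eq with hxpos | hxzero
    · rcases hq0.lt_or_eq with hqpos | hqzero
      · exact ratio_bound hxpos hx1 hqpos hq1 ht
      · rw [← hqzero, neg_zero, Real.rpow_zero, mul_one, add_zero]
        nlinarith [norm_nonneg (Complex.Gamma (((x:ℝ):ℂ) + t*I))]
    · -- x = 0, so σ = 0 and q = n/2 - k ∈ {1/2, 1}
      have hσ0 : σ = 0 := by rw [hx_def] at hxzero; linarith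
      have hqc : q = (n:ℝ)/2 - k := by rw [hq_def, hσ0]; ring
      rcases hc with h | h
      · have hqval : q = 1/2 := by rw [hqc, h]
        rw [← hxzero, hqval]
        exact ratio_bound_zero_half ht
      · have hqval : q = 1 := by rw [hqc, h]
        rw [← hxzero, hqval]
        have h01 : (((0:ℝ):ℂ) + t*I) = (t:ℂ)*I := by push_cast; ring
        have hne2 : (t:ℂ)*I ≠ 0 := by
          simp [Complex.ext_iff, ht0.ne']
        have h02 : (((0+1:ℝ):ℂ) + t*I) = ((t:ℂ)*I) + 1 := by push_cast; ring
        rw [h01, h02, Complex.Gamma_add_one _ hne2, norm_mul]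
        rw [norm_mul, Complex.norm_I, mul_one, Complex.norm_real, Real.norm_eq_abs, _root_.abs_of_pos ht0]
        rw [Real.rpow_neg_one t]
        rw [show (15:ℝ) * t⁻¹ * (t * ‖Complex.Gamma ((t:ℂ)*I)‖)
            = 15 * (t⁻¹ * t) * ‖Complex.Gamma ((t:ℂ)*I)‖ by ring,
          inv_mul_cancel₀ ht0.ne', mul_one]
        nlinarith [norm_nonneg (Complex.Gamma ((t:ℂ)*I))]
  -- Part C : denominator downshift
  set w : ℂ := ((x+q:ℝ):ℂ) + t*I with hw_def
  have hwim : w.im ≠ 0 := by simp [hw_def]; exact ht0.ne'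
  have hwk : w + (k:ℂ) = (((n:ℝ)/2+σ:ℝ):ℂ) + t*I := by
    rw [hw_def]
    push_cast
    rw [show ((x:ℝ):ℂ) + (q:ℂ) + ((t:ℝ):ℂ)*I + (k:ℂ) = (((x+q+k:ℝ)):ℂ) + ((t:ℝ):ℂ)*I by push_cast; ring]
    rw [show (x+q+(k:ℝ)) = (n:ℝ)/2 + σ by rw [hxq]; ring]
    push_cast
    ring
  have hshift := Gamma_shift w hwim k
  rw [hwk] at hshift
  have habs_den : ‖Complex.Gamma ((((n:ℝ)/2+σ:ℝ):ℂ) + t*I)‖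
      = ‖Complex.Gamma w‖ * ∏ i ∈ Finset.range k, ‖w + i‖ := by
    rw [hshift, norm_mul, norm_prod]
  have hprod : (t:ℝ)^(k:ℕ) ≤ ∏ i ∈ Finset.range k, ‖w + i‖ := by
    have : ∏ _i ∈ Finset.range k, t ≤ ∏ i ∈ Finset.range k, ‖w + i‖ := by
      apply Finset.prod_le_prod (fun i _ => ht0.le)
      intro i _
      calc t = |(w + (i:ℂ)).im| := by
            simp [hw_def]
            exact (_root_.abs_of_pos ht0).symm
      _ ≤ ‖w + i‖ := Complex.abs_im_le_norm _
    simpa using this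
  have hD0 : 0 ≤ ‖Complex.Gamma ((((n:ℝ)/2+σ:ℝ):ℂ) + t*I)‖ := norm_nonneg _
  have hGw : ‖Complex.Gamma w‖ * (t:ℝ)^(k:ℕ)
      ≤ ‖Complex.Gamma ((((n:ℝ)/2+σ:ℝ):ℂ) + t*I)‖ := by
    rw [habs_den]
    exact mul_le_mul_of_nonneg_left hprod (norm_nonneg _)
  have hGw' : ‖Complex.Gamma w‖
      ≤ ‖Complex.Gamma ((((n:ℝ)/2+σ:ℝ):ℂ) + t*I)‖ * ((t:ℝ)^(k:ℕ))⁻¹ := by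
    rw [← le_div_iff₀ (pow_pos ht0 k)] at hGw
    rw [div_eq_mul_inv] at hGw
    exact hGw
  -- scalar inequality
  have hscalar : (1+t) * t^(-q) * ((t:ℝ)^(k:ℕ))⁻¹ ≤ 2^(n+1) * (1+t)^(-2*σ - (n:ℝ)/2 + 1) := by
    have htk : ((t:ℝ)^(k:ℕ))⁻¹ = t^(-(k:ℝ)) := by
      rw [← Real.rpow_natCast t k, ← Real.rpow_neg ht0.le]
    rw [htk, mul_assoc, ← Real.rpow_add ht0]
    have hE : -2*σ - (n:ℝ)/2 + 1 = 1 + (-(q + (k:ℝ))) := by rw [hqk]; ring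
    rw [hE, Real.rpow_add (by linarith : (0:ℝ) < 1+t), Real.rpow_one]
    rw [show -q + -(k:ℝ) = -(q+(k:ℝ)) by ring]
    rw [show (2:ℝ)^(n+1) * ((1+t) * (1+t)^(-(q+(k:ℝ)))) = (1+t) * (2^(n+1) * (1+t)^(-(q+(k:ℝ)))) by ring]
    apply mul_le_mul_of_nonneg_left _ (by linarith)
    -- t^(-(q+k)) ≤ 2^(n+1) * (1+t)^(-(q+k))
    rw [Real.rpow_neg ht0.le, Real.rpow_neg (by linarith : (0:ℝ) ≤ 1+t)]
    have h1 : (0:ℝ) < t^(q+(k:ℝ)) := Real.rpow_pos_of_pos ht0 _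
    have h2 : (0:ℝ) < (1+t)^(q+(k:ℝ)) := Real.rpow_pos_of_pos (by linarith) _
    have hbase : (1+t)^(q+(k:ℝ)) ≤ 2^(n+1) * t^(q+(k:ℝ)) := by
      calc (1+t)^(q+(k:ℝ)) ≤ (2*t)^(q+(k:ℝ)) :=
            Real.rpow_le_rpow (by linarith) (by linarith) hqk0
      _ = 2^(q+(k:ℝ)) * t^(q+(k:ℝ)) := Real.mul_rpow (by norm_num) ht0.le
      _ ≤ 2^((n:ℝ)+1) * t^(q+(k:ℝ)) := by
          apply mul_le_mul_of_nonneg_right _ (Real.rpow_nonneg ht0.le _)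
          exact Real.rpow_le_rpow_of_exponent_le one_le_two hqkn
      _ = 2^(n+1) * t^(q+(k:ℝ)) := by
          rw [show ((n:ℝ)+1) = ((n+1 : ℕ):ℝ) by push_cast; ring, Real.rpow_natCast]
    calc (t^(q+(k:ℝ)))⁻¹
        = (1+t)^(q+(k:ℝ)) * ((1+t)^(q+(k:ℝ)))⁻¹ * (t^(q+(k:ℝ)))⁻¹ := by
          rw [mul_inv_cancel₀ h2.ne', one_mul]
    _ ≤ (2^(n+1) * t^(q+(k:ℝ))) * ((1+t)^(q+(k:ℝ)))⁻¹ * (t^(q+(k:ℝ)))⁻¹ := by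
          apply mul_le_mul_of_nonneg_right
            (mul_le_mul_of_nonneg_right hbase (by positivity)) (by positivity)
    _ = 2^(n+1) * ((1+t)^(q+(k:ℝ)))⁻¹ * (t^(q+(k:ℝ)) * (t^(q+(k:ℝ)))⁻¹) := by ring
    _ = 2^(n+1) * ((1+t)^(q+(k:ℝ)))⁻¹ := by rw [mul_inv_cancel₀ h1.ne', mul_one]
  -- final combination
  have hA : ‖((x:ℝ):ℂ) + t*I‖ ≤ 1 + t := by
    calc ‖((x:ℝ):ℂ) + t*I‖ ≤ |(((x:ℝ):ℂ) + t*I).re| + |(((x:ℝ):ℂ) + t*I).im| :=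
          Complex.norm_le_abs_re_add_abs_im _
    _ = |x| + |t| := by simp
    _ ≤ 1 + t := by
        rw [_root_.abs_of_nonneg hx0, _root_.abs_of_pos ht0]
        linarith
  calc ‖Complex.Gamma (((1-σ:ℝ):ℂ) + t*I)‖
      = ‖((x:ℝ):ℂ) + t*I‖ * ‖Complex.Gamma (((x:ℝ):ℂ) + t*I)‖ :=
        habs_num
  _ ≤ (1+t) * (15 * t^(-q) * ‖Complex.Gamma w‖) := by
      apply mul_le_mul hA habs_ratio (norm_nonneg _) (by linarith)
  _ ≤ (1+t) * (15 * t^(-q) *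
        (‖Complex.Gamma ((((n:ℝ)/2+σ:ℝ):ℂ) + t*I)‖ * ((t:ℝ)^(k:ℕ))⁻¹)) := by
      apply mul_le_mul_of_nonneg_left _ (by linarith)
      apply mul_le_mul_of_nonneg_left hGw' (by positivity)
  _ = ((1+t) * t^(-q) * ((t:ℝ)^(k:ℕ))⁻¹) *
        15 * ‖Complex.Gamma ((((n:ℝ)/2+σ:ℝ):ℂ) + t*I)‖ := by ring
  _ ≤ (2^(n+1) * (1+t)^(-2*σ - (n:ℝ)/2 + 1)) *
        15 * ‖Complex.Gamma ((((n:ℝ)/2+σ:ℝ):ℂ) + t*I)‖ := by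
      apply mul_le_mul_of_nonneg_right
        (mul_le_mul_of_nonneg_right hscalar (by norm_num)) hD0
  _ = (15 * 2^(n+1)) * (1+t)^(-2*σ - (n:ℝ)/2 + 1) *
        ‖Complex.Gamma ((((n:ℝ)/2+σ:ℝ):ℂ) + t*I)‖ := by ring

end Stmt4Aux

open Stmt4Aux

/-- There is a constant `C` such that for all `s ∈ ℂ` with `Re(s) ∈ [−1/4, 0]`,
`|s · Γ(−s)/Γ(n/2 + s)| ≤ C·(1 + |Im(s)|)^(−2Re(s) − n/2 + 1)`. -/
theorem stmt_4 (n : ℕ) (hn : 1 ≤ n) :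
    ∃ C > (0:ℝ), ∀ s : ℂ, s.re ∈ Set.Icc (-(1:ℝ)/4) 0 →
      ‖s * Complex.Gamma (-s) / Complex.Gamma ((n:ℂ)/2 + s)‖
        ≤ C * (1 + |s.im|) ^ (-2 * s.re - (n:ℝ)/2 + 1) := by
  have hn1 : (1:ℝ) ≤ (n:ℝ) := by exact_mod_cast hn
  -- compact region bound
  set K : Set ℂ := {w : ℂ | w.re ∈ Icc (-(1:ℝ)/4) 0 ∧ w.im ∈ Icc (-2:ℝ) 2} with hK_def
  have hKclosed : IsClosed K := by
    have : K = Complex.re ⁻¹' (Icc (-(1:ℝ)/4) 0) ∩ Complex.im ⁻¹' (Icc (-2:ℝ) 2) := rfl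
    rw [this]
    exact (isClosed_Icc.preimage Complex.continuous_re).inter
      (isClosed_Icc.preimage Complex.continuous_im)
  have hKc : IsCompact K := by
    apply (isCompact_closedBall (0:ℂ) 3).of_isClosed_subset hKclosed
    intro w hw
    rw [Metric.mem_closedBall, dist_zero_right]
    calc ‖w‖ ≤ |w.re| + |w.im| := Complex.norm_le_abs_re_add_abs_im w
    _ ≤ 3 := by
        obtain ⟨⟨h1, h2⟩, h3, h4⟩ := hw
        have e1 : |w.re| ≤ 1/4 := abs_le.2 ⟨by linarith, by linarith⟩
        have e2 : |w.im| ≤ 2 := abs_le.2 ⟨h3, h4⟩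
        linarith
  have hGcont : ContinuousOn
      (fun w => Complex.Gamma (1-w) * (Complex.Gamma ((n:ℂ)/2 + w))⁻¹) K := by
    intro s hs
    apply ContinuousAt.continuousWithinAt
    apply ContinuousAt.mul
    · have harg : ∀ m : ℕ, (1:ℂ) - s ≠ -(m:ℂ) := by
        intro m h
        have hre := congrArg Complex.re h
        simp only [Complex.sub_re, Complex.one_re, Complex.neg_re, Complex.natCast_re] at hre
        have := hs.1.2
        have hm : (0:ℝ) ≤ (m:ℝ) := Nat.cast_nonneg m
        linarith
      exact (Complex.differentiableAt_Gamma _ harg).continuousAt.comp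
        ((continuous_const.sub continuous_id).continuousAt)
    · exact ((Complex.differentiable_one_div_Gamma.comp
        ((differentiable_const _).add differentiable_id)).continuous).continuousAt
  obtain ⟨C₀, hC₀⟩ := hKc.exists_bound_of_continuousOn hGcont
  set M : ℝ := max C₀ 1 with hM_def
  have hM1 : (1:ℝ) ≤ M := le_max_right _ _
  have hM0 : (0:ℝ) < M := by linarith
  set C : ℝ := 15 * 2^(n+1) + M * 3^((n:ℝ)) with hC_def
  have hC0 : (0:ℝ) < C := by positivity
  refine ⟨C, hC0, ?_⟩
  intro s hs
  obtain ⟨hs1, hs2⟩ := hs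
  rcases eq_or_ne s 0 with rfl | hs0
  · simp only [zero_mul, zero_div, norm_zero]
    positivity
  · have hkey : s * Complex.Gamma (-s) = -Complex.Gamma (1 - s) := by
      have h := Complex.Gamma_add_one (-s) (neg_ne_zero.2 hs0)
      rw [show (1:ℂ) - s = -s + 1 by ring, h]
      ring
    rw [hkey, norm_div, norm_neg]
    have hhalf : (n:ℂ)/2 = (((n:ℝ)/2:ℝ):ℂ) := by push_cast; ring
    have hcast : (n:ℂ)/2 + s = (((n:ℝ)/2 + s.re : ℝ):ℂ) + (s.im:ℝ)*I := by
      rw [hhalf]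
      apply Complex.ext <;> simp
    have hnum : (1:ℂ) - s = ((1 - s.re : ℝ):ℂ) + ((-s.im:ℝ):ℝ)*I := by
      apply Complex.ext <;> simp
    have hD_ne : Complex.Gamma ((n:ℂ)/2 + s) ≠ 0 := by
      apply Complex.Gamma_ne_zero_of_re_pos
      rw [hcast]
      simp only [Complex.add_re, Complex.ofReal_re, Complex.mul_re, Complex.I_re,
        Complex.ofReal_im, Complex.I_im]
      ring_nf
      nlinarith [hn1, hs1]
    have hD_pos : 0 < ‖Complex.Gamma ((n:ℂ)/2 + s)‖ :=
      norm_pos_iff.2 hD_ne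
    rw [div_le_iff₀ hD_pos]
    have hrpow_nn : (0:ℝ) ≤ (1 + |s.im|) ^ (-2 * s.re - (n:ℝ)/2 + 1) :=
      Real.rpow_nonneg (by positivity) _
    rcases le_or_gt |s.im| 2 with him | him
    · -- compact case
      have hsK : s ∈ K := ⟨⟨hs1, hs2⟩, abs_le.1 him⟩
      have hb := (hC₀ s hsK).trans (le_max_left C₀ 1)
      rw [norm_mul, norm_inv] at hb
      have h1 : ‖Complex.Gamma (1-s)‖ ≤
          M * ‖Complex.Gamma ((n:ℂ)/2+s)‖ := by
        rw [mul_inv_le_iff₀ hD_pos] at hb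
        linarith [hb]
      have hE_lb : (3:ℝ)^(-(n:ℝ)) ≤ (1 + |s.im|) ^ (-2 * s.re - (n:ℝ)/2 + 1) := by
        have hb1 : (1:ℝ) ≤ 1 + |s.im| := by linarith [abs_nonneg s.im]
        have hb3 : 1 + |s.im| ≤ 3 := by linarith
        have hEn : -(n:ℝ) ≤ -2 * s.re - (n:ℝ)/2 + 1 := by linarith
        calc (3:ℝ)^(-(n:ℝ)) ≤ (1+|s.im|)^(-(n:ℝ)) :=
              Real.rpow_le_rpow_of_nonpos (by linarith) hb3 (by linarith)
        _ ≤ (1+|s.im|) ^ (-2 * s.re - (n:ℝ)/2 + 1) :=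
              Real.rpow_le_rpow_of_exponent_le hb1 hEn
      have hMC : M ≤ C * (1 + |s.im|) ^ (-2 * s.re - (n:ℝ)/2 + 1) := by
        have hMeq : M = (M * 3^((n:ℝ))) * 3^(-(n:ℝ)) := by
          rw [mul_assoc, ← Real.rpow_add (by norm_num : (0:ℝ) < 3)]
          simp
        calc M = (M * 3^((n:ℝ))) * 3^(-(n:ℝ)) := hMeq
        _ ≤ (M * 3^((n:ℝ))) * ((1 + |s.im|) ^ (-2 * s.re - (n:ℝ)/2 + 1)) :=
              mul_le_mul_of_nonneg_left hE_lb (by positivity)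
        _ ≤ C * (1 + |s.im|) ^ (-2 * s.re - (n:ℝ)/2 + 1) := by
              apply mul_le_mul_of_nonneg_right _ hrpow_nn
              have hpos : (0:ℝ) < 15 * 2^(n+1) := by positivity
              rw [hC_def]
              linarith
      calc ‖Complex.Gamma (1-s)‖
          ≤ M * ‖Complex.Gamma ((n:ℂ)/2+s)‖ := h1
      _ ≤ (C * (1 + |s.im|) ^ (-2 * s.re - (n:ℝ)/2 + 1)) *
            ‖Complex.Gamma ((n:ℂ)/2+s)‖ :=
            mul_le_mul_of_nonneg_right hMC hD_pos.le
    · -- |Im s| ≥ 2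
      have ht2 : 2 ≤ |s.im| := him.le
      have hnum_abs : ‖Complex.Gamma (1-s)‖ =
          ‖Complex.Gamma (((1-s.re:ℝ):ℂ) + (|s.im|:ℝ)*I)‖ := by
        rw [hnum, abs_Gamma_absIm (1-s.re) (-s.im), abs_neg]
      have hden_abs : ‖Complex.Gamma ((n:ℂ)/2+s)‖ =
          ‖Complex.Gamma ((((n:ℝ)/2+s.re:ℝ):ℂ) + (|s.im|:ℝ)*I)‖ := by
        rw [hcast, abs_Gamma_absIm]
      rw [hnum_abs, hden_abs]
      have hW := workhorse n hn (σ := s.re) (t := |s.im|) (by linarith) hs2 ht2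
      refine hW.trans ?_
      apply mul_le_mul_of_nonneg_right _ (norm_nonneg _)
      apply mul_le_mul_of_nonneg_right _ (Real.rpow_nonneg (by positivity) _)
      have hpos : (0:ℝ) ≤ M * 3^((n:ℝ)) := by positivity
      rw [hC_def]
      linarith
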